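/- arXiv:math/0602660 — 3 statements merged into one kernel-verified Lean document; each statement's English description precedes it below -/
import Mathlib

section
/- Let K be a commutative ring and let C_P ⊆ A_P be the K-subalgebra generated by all coefficients ψ_k(f), k = 1,...,n, f ∈ K[y_1,...,y_m], of characteristic polynomials of polynomials in the generic commuting matrices. Then the homomorphism Δ' : A_P → D (sending ξ'_{kij} to δ_{ij} x_{ik}) maps C_P surjectively onto the ring of multisymmetric functions D^{S_n}. -/
/-!
`Δ'` sends the generic matrix `ξ'_k` to `diag(x_{1k}, …, x_{nk})`, hence `f(ξ'_1, …, ξ'_m)` to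
`diag(f(x_1), …, f(x_n))` and `ψ_k(f)` to `e_k(f)`, the `k`-th elementary symmetric function of
the `f(x_i)`. So `Δ'(C_P)` is the algebra generated by the `e_k(f)`, and it remains to see
(Vaccarino) that these generate `D^{S_n}`. Invariants are combinations of orbit sums of monomials.
If the rows of an exponent `t` equal to `μ ≠ 0` form the set `A` and `t'` is `t` with these rows
cleared, then in `e_{#A}(x^μ) · orbitSum(t')` the terms whose new `μ`-rows avoid the nonzero rows
of the second factor form exactly the orbit of `t`, while the remaining terms make up an invariant
polynomial whose monomials all have fewer nonzero rows; induct on the number of nonzero rows.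
-/

open MvPolynomial Matrix

/-- Evaluation of a (commutative) polynomial at an `m`-tuple of pairwise commuting
`n × n` matrices, as a `K`-algebra homomorphism into the matrix ring. -/
noncomputable def matEval {K R : Type*} [CommRing K] [CommRing R] [Algebra K R] {n m : ℕ}
    (M : Fin m → Matrix (Fin n) (Fin n) R)
    (h : ∀ a ∈ Set.range M, ∀ b ∈ Set.range M, a * b = b * a) :
    MvPolynomial (Fin m) K →ₐ[K] Matrix (Fin n) (Fin n) R :=
  letI := Algebra.adjoinCommRingOfComm K h
  (Algebra.adjoin K (Set.range M)).val.comp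
    (MvPolynomial.aeval fun k =>
      (⟨M k, Algebra.subset_adjoin ⟨k, rfl⟩⟩ : Algebra.adjoin K (Set.range M)))

open Finset

noncomputable section

theorem Finsupp.curry_add {α β M : Type*} [AddZeroClass M] (t u : α × β →₀ M) :
    (t + u).curry = t.curry + u.curry :=
  map_add Finsupp.curryAddEquiv t u

section Fintype

variable {ι β : Type*} [Fintype ι]

theorem Fintype.exists_perm_comp_eq_of_map_univ_val_eq {f g : ι → β}
    (h : univ.val.map f = univ.val.map g) : ∃ σ : Equiv.Perm ι, ∀ i, g (σ i) = f i := by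
  classical
  have hcard : ∀ c, Fintype.card {i // f i = c} = Fintype.card {i // g i = c} := by
    intro c
    have := congrArg (Multiset.count c) h
    simp only [Multiset.count_map, eq_comm (a := c)] at this
    rw [Fintype.card_subtype, Fintype.card_subtype]
    convert this using 1 <;> rfl
  exact ⟨Equiv.ofFiberEquiv fun c => Fintype.equivOfCardEq (hcard c), Equiv.ofFiberEquiv_map _⟩

theorem Fintype.map_univ_val_add_replicate {f g : ι → β} {S : Finset ι} {c d : β}
    (hf : ∀ i ∈ S, f i = c) (hg : ∀ i ∈ S, g i = d) (hfg : ∀ i ∉ S, f i = g i) :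
    univ.val.map f + Multiset.replicate #S d = univ.val.map g + Multiset.replicate #S c := by
  classical
  have split : ∀ (h : ι → β) (e : β), (∀ i ∈ S, h i = e) →
      univ.val.map h = Multiset.replicate #S e + (univ.val.filter (· ∉ S)).map h := by
    intro h e he
    conv_lhs => rw [← Multiset.filter_add_not (· ∈ S) univ.val, Multiset.map_add]
    congr 1
    refine Multiset.eq_replicate.2 ⟨?_, fun b hb => ?_⟩
    · rw [Multiset.card_map, ← Finset.filter_val, Finset.filter_mem_eq_inter, univ_inter]
      rfl
    · obtain ⟨i, hi, rfl⟩ := Multiset.mem_map.1 hb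
      exact he i (Multiset.mem_filter.1 hi).2
  rw [split f c hf, split g d hg,
    Multiset.map_congr rfl fun i hi => hfg i (Multiset.mem_filter.1 hi).2]
  abel

end Fintype

namespace MvPolynomial

variable {K ι κ : Type*} [CommRing K]

def IsMultisymmetric (p : MvPolynomial (ι × κ) K) : Prop :=
  ∀ σ : Equiv.Perm ι, rename (fun x : ι × κ => (σ x.1, x.2)) p = p

variable (K ι κ) in
def multisymmetricSubalgebra : Subalgebra K (MvPolynomial (ι × κ) K) where
  carrier := {p | IsMultisymmetric p}
  mul_mem' ha hb σ := by rw [map_mul, ha σ, hb σ]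
  add_mem' ha hb σ := by rw [map_add, ha σ, hb σ]
  algebraMap_mem' c σ := rename_C _ c

section Exponents

def permRows (σ : Equiv.Perm ι) (t : ι × κ →₀ ℕ) : ι × κ →₀ ℕ :=
  t.mapDomain fun x => (σ x.1, x.2)

theorem permRows_curry (σ : Equiv.Perm ι) (t : ι × κ →₀ ℕ) (i : ι) :
    (permRows σ t).curry i = t.curry (σ⁻¹ i) := by
  ext k
  simpa [permRows] using Finsupp.mapDomain_apply (f := fun x : ι × κ => (σ x.1, x.2))
    (σ.prodCongr (Equiv.refl κ)).injective t (σ⁻¹ i, k)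

theorem permRows_add (σ : Equiv.Perm ι) (t u : ι × κ →₀ ℕ) :
    permRows σ (t + u) = permRows σ t + permRows σ u :=
  Finsupp.mapDomain_add

theorem permRows_mul (σ τ : Equiv.Perm ι) (t : ι × κ →₀ ℕ) :
    permRows (σ * τ) t = permRows σ (permRows τ t) := by
  rw [permRows, permRows, permRows, ← Finsupp.mapDomain_comp]
  rfl

theorem permRows_one (t : ι × κ →₀ ℕ) : permRows 1 t = t :=
  Finsupp.mapDomain_id

theorem rename_monomial_permRows (σ : Equiv.Perm ι) (t : ι × κ →₀ ℕ) (r : K) :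
    rename (fun x : ι × κ => (σ x.1, x.2)) (monomial t r) = monomial (permRows σ t) r :=
  rename_monomial _ _ _

theorem IsMultisymmetric.coeff_permRows {p : MvPolynomial (ι × κ) K} (hp : p.IsMultisymmetric)
    (σ : Equiv.Perm ι) (t : ι × κ →₀ ℕ) : coeff (permRows σ t) p = coeff t p := by
  conv_lhs => rw [← hp σ]
  exact coeff_rename_mapDomain _ (σ.prodCongr (Equiv.refl κ)).injective p t

/-- The exponent of `∏_{i ∈ S} x_i^μ`. -/
def rowsOn (S : Finset ι) (μ : κ →₀ ℕ) : ι × κ →₀ ℕ :=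
  ∑ i ∈ S, μ.mapDomain (Prod.mk i)

theorem curry_mapDomain_prodMk (μ : κ →₀ ℕ) (j : ι) :
    (μ.mapDomain (Prod.mk j)).curry = Finsupp.single j μ := by
  classical
  ext i k
  by_cases h : i = j
  · subst h
    simp [Finsupp.mapDomain_apply (Prod.mk_right_injective i)]
  · rw [Finsupp.curry_apply, Finsupp.single_eq_of_ne h, Finsupp.mapDomain_of_notMem_range]
    · rfl
    · rintro ⟨k', hk'⟩
      exact h (congrArg Prod.fst hk').symm

theorem curry_rowsOn (S : Finset ι) (μ : κ →₀ ℕ) :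
    (rowsOn S μ).curry = ∑ j ∈ S, Finsupp.single j μ := by
  rw [rowsOn, ← Finsupp.coe_curryAddEquiv, map_sum]
  simp only [Finsupp.coe_curryAddEquiv, curry_mapDomain_prodMk]

theorem curry_rowsOn_of_mem {S : Finset ι} {i : ι} (h : i ∈ S) (μ : κ →₀ ℕ) :
    (rowsOn S μ).curry i = μ := by
  classical
  simp [curry_rowsOn, Finsupp.single_apply, h]

theorem curry_rowsOn_of_notMem {S : Finset ι} {i : ι} (h : i ∉ S) (μ : κ →₀ ℕ) :
    (rowsOn S μ).curry i = 0 := by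
  classical
  simp [curry_rowsOn, Finsupp.single_apply, h]

theorem permRows_rowsOn (σ : Equiv.Perm ι) (S : Finset ι) (μ : κ →₀ ℕ) :
    permRows σ (rowsOn S μ) = rowsOn (S.map σ.toEmbedding) μ := by
  refine Finsupp.curryEquiv.injective (Finsupp.ext fun i => ?_)
  simp only [Finsupp.curryEquiv_apply, permRows_curry]
  by_cases h : σ⁻¹ i ∈ S
  · rw [curry_rowsOn_of_mem h, curry_rowsOn_of_mem (Finset.mem_map_equiv.2 h)]
  · rw [curry_rowsOn_of_notMem h, curry_rowsOn_of_notMem (mt Finset.mem_map_equiv.1 h)]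

theorem mem_iff_curry_rowsOn_add_eq {S : Finset ι} {s : ι × κ →₀ ℕ} {μ : κ →₀ ℕ}
    (hs : ∀ i ∈ S, s.curry i = 0) (hμ : ∀ i, s.curry i ≠ μ) (i : ι) :
    i ∈ S ↔ (rowsOn S μ + s).curry i = μ := by
  rw [Finsupp.curry_add, Finsupp.add_apply]
  by_cases h : i ∈ S
  · simp [h, curry_rowsOn_of_mem h, hs i h]
  · simp [h, curry_rowsOn_of_notMem h, hμ i]

theorem card_support_curry_rowsOn_add {A : Finset ι} {μ : κ →₀ ℕ} {t : ι × κ →₀ ℕ} (hμ : μ ≠ 0)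
    (hA : ∀ i ∈ A, t.curry i = 0) :
    #(rowsOn A μ + t).curry.support = #A + #t.curry.support := by
  classical
  rw [← card_union_of_disjoint (disjoint_left.2 fun i hi hit =>
    Finsupp.mem_support_iff.1 hit (hA i hi))]
  congr 1
  ext i
  rw [Finsupp.mem_support_iff, Finsupp.curry_add, Finsupp.add_apply, mem_union,
    Finsupp.mem_support_iff]
  by_cases h : i ∈ A
  · simp [curry_rowsOn_of_mem h, hA i h, hμ, h]
  · simp [curry_rowsOn_of_notMem h, h]

end Exponents

variable [Fintype ι]

section Orbits

def rowMultiset (t : ι × κ →₀ ℕ) : Multiset (κ →₀ ℕ) := univ.val.map t.curry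

theorem rowMultiset_permRows (σ : Equiv.Perm ι) (t : ι × κ →₀ ℕ) :
    rowMultiset (permRows σ t) = rowMultiset t := by
  conv_rhs => rw [rowMultiset, ← Multiset.map_univ_val_equiv σ⁻¹, Multiset.map_map]
  simp only [rowMultiset, Function.comp_def, permRows_curry]

theorem exists_permRows_eq_iff {t u : ι × κ →₀ ℕ} :
    (∃ σ, permRows σ t = u) ↔ rowMultiset u = rowMultiset t := by
  refine ⟨fun ⟨σ, hσ⟩ => hσ ▸ rowMultiset_permRows σ t, fun h => ?_⟩
  obtain ⟨σ, hσ⟩ := Fintype.exists_perm_comp_eq_of_map_univ_val_eq h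
  refine ⟨σ⁻¹, Finsupp.curryEquiv.injective (Finsupp.ext fun i => ?_)⟩
  simpa [permRows_curry] using hσ i

theorem card_support_curry_eq_of_rowMultiset_eq {t u : ι × κ →₀ ℕ}
    (h : rowMultiset u = rowMultiset t) : #u.curry.support = #t.curry.support := by
  classical
  have key : ∀ v : ι × κ →₀ ℕ, #v.curry.support = (rowMultiset v).countP (· ≠ 0) := by
    intro v
    rw [rowMultiset, Multiset.countP_map, ← Finset.filter_val, ← Finset.card_def]
    congr 1
    ext i
    simp [Finsupp.ext_iff]
  rw [key, key, h]

theorem rowMultiset_rowsOn_add {S : Finset ι} {s : ι × κ →₀ ℕ} (hs : ∀ i ∈ S, s.curry i = 0)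
    (μ : κ →₀ ℕ) :
    rowMultiset (rowsOn S μ + s) + Multiset.replicate #S 0 =
      rowMultiset s + Multiset.replicate #S μ :=
  Fintype.map_univ_val_add_replicate
    (fun i hi => by
      rw [Finsupp.curry_add, Finsupp.add_apply, curry_rowsOn_of_mem hi, hs i hi, add_zero])
    hs (fun i hi => by
      rw [Finsupp.curry_add, Finsupp.add_apply, curry_rowsOn_of_notMem hi, zero_add])

open Classical in
def rowOrbit (t : ι × κ →₀ ℕ) : Finset (ι × κ →₀ ℕ) :=
  univ.image fun σ : Equiv.Perm ι => permRows σ t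

theorem mem_rowOrbit {t u : ι × κ →₀ ℕ} : u ∈ rowOrbit t ↔ rowMultiset u = rowMultiset t := by
  simp [rowOrbit, exists_permRows_eq_iff]

theorem permRows_mem_rowOrbit (σ : Equiv.Perm ι) (t : ι × κ →₀ ℕ) : permRows σ t ∈ rowOrbit t :=
  mem_rowOrbit.2 (rowMultiset_permRows σ t)

theorem exists_curry_eq_of_mem_rowOrbit {s t : ι × κ →₀ ℕ} (hs : s ∈ rowOrbit t) (i : ι) :
    ∃ j, t.curry j = s.curry i := by
  obtain ⟨σ, rfl⟩ := exists_permRows_eq_iff.2 (mem_rowOrbit.1 hs)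
  exact ⟨σ⁻¹ i, (permRows_curry σ t i).symm⟩

variable (K) in
def orbitSum (t : ι × κ →₀ ℕ) : MvPolynomial (ι × κ) K :=
  ∑ u ∈ rowOrbit t, monomial u 1

open Classical in
theorem coeff_orbitSum (t u : ι × κ →₀ ℕ) :
    coeff u (orbitSum K t) = if u ∈ rowOrbit t then 1 else 0 := by
  simp only [orbitSum, coeff_sum, coeff_monomial, Finset.sum_ite_eq']

theorem orbitSum_zero : orbitSum K (0 : ι × κ →₀ ℕ) = 1 := by
  have : rowOrbit (0 : ι × κ →₀ ℕ) = {0} := by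
    simp [rowOrbit, permRows, Finset.image_const]
  rw [orbitSum, this, sum_singleton, monomial_zero', C_1]

theorem isMultisymmetric_orbitSum (t : ι × κ →₀ ℕ) : (orbitSum K t).IsMultisymmetric := by
  intro σ
  simp only [orbitSum, map_sum, rename_monomial_permRows]
  refine Finset.sum_nbij' (permRows σ) (permRows σ⁻¹) (fun u hu => ?_) (fun u hu => ?_)
    (fun u _ => ?_) (fun u _ => ?_) (fun _ _ => rfl)
  · rwa [mem_rowOrbit, rowMultiset_permRows, ← mem_rowOrbit]
  · rwa [mem_rowOrbit, rowMultiset_permRows, ← mem_rowOrbit]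
  · rw [← permRows_mul, inv_mul_cancel, permRows_one]
  · rw [← permRows_mul, mul_inv_cancel, permRows_one]

theorem IsMultisymmetric.mem_of_orbitSum_mem {S : Subalgebra K (MvPolynomial (ι × κ) K)}
    {p : MvPolynomial (ι × κ) K} (hp : p.IsMultisymmetric)
    (h : ∀ t ∈ p.support, orbitSum K t ∈ S) : p ∈ S := by
  induction hN : #p.support using Nat.strong_induction_on generalizing p with
  | _ N ih =>
  classical
  obtain rfl | ⟨t, ht⟩ := p.support.eq_empty_or_nonempty.imp_left support_eq_empty.1
  · exact S.zero_mem
  set q := p - C (coeff t p) * orbitSum K t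
  have hsupp : q.support ⊆ p.support.erase t := by
    intro u hu
    rw [mem_support_iff] at hu
    by_cases hut : u ∈ rowOrbit t
    · obtain ⟨σ, rfl⟩ := exists_permRows_eq_iff.2 (mem_rowOrbit.1 hut)
      simp [q, coeff_orbitSum, hut, hp.coeff_permRows] at hu
    · have hne : u ≠ t := fun h => hut (h ▸ mem_rowOrbit.2 rfl)
      simp_all [q, coeff_orbitSum]
  have hq : q ∈ S := by
    refine ih #q.support ?_ (fun σ => ?_) (fun u hu => h u ?_) rfl
    · exact hN ▸ (card_le_card hsupp).trans_lt (card_erase_lt_of_mem ht)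
    · rw [map_sub, map_mul, rename_C, hp σ, isMultisymmetric_orbitSum t σ]
    · exact mem_of_mem_erase (hsupp hu)
  rw [show p = q + C (coeff t p) * orbitSum K t by ring]
  exact add_mem hq (mul_mem (S.algebraMap_mem _) (h t ht))

end Orbits

section ElementaryMultisymmetric

variable (ι) in
/-- The paper's `e_k(f)`: the `k`-th elementary symmetric function of `f(x_1), …, f(x_n)`,
where `x_i = (x_{i1}, …, x_{im})`. -/
def multiEsymm (k : ℕ) (f : MvPolynomial κ K) : MvPolynomial (ι × κ) K :=
  aeval (fun i => rename (Prod.mk i) f) (esymm ι K k)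

theorem isMultisymmetric_multiEsymm (k : ℕ) (f : MvPolynomial κ K) :
    (multiEsymm ι k f).IsMultisymmetric := by
  intro σ
  rw [multiEsymm, ← AlgHom.comp_apply, comp_aeval]
  simp only [rename_rename]
  calc aeval (fun i => rename ((fun x : ι × κ => (σ x.1, x.2)) ∘ Prod.mk i) f) (esymm ι K k)
      = aeval ((fun i => rename (Prod.mk i) f) ∘ σ) (esymm ι K k) := rfl
    _ = _ := by rw [← aeval_rename, esymm_isSymmetric ι K k σ]

theorem multiEsymm_monomial (k : ℕ) (μ : κ →₀ ℕ) :
    multiEsymm ι k (monomial μ (1 : K)) = ∑ S ∈ powersetCard k univ, monomial (rowsOn S μ) 1 := by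
  simp [multiEsymm, esymm, rename_monomial, rowsOn, monomial_sum_one]

theorem multiEsymm_monomial_mul_orbitSum (k : ℕ) (μ : κ →₀ ℕ) (t : ι × κ →₀ ℕ) :
    multiEsymm ι k (monomial μ (1 : K)) * orbitSum K t =
      ∑ p ∈ powersetCard k univ ×ˢ rowOrbit t, monomial (rowsOn p.1 μ + p.2) 1 := by
  simp [multiEsymm_monomial, orbitSum, sum_mul_sum, sum_product, monomial_mul]

variable {μ : κ →₀ ℕ} {A : Finset ι} {t : ι × κ →₀ ℕ}

open Classical in
theorem sum_rowsOn_add_eq_orbitSum (hA : ∀ i ∈ A, t.curry i = 0) (hμ : ∀ i, t.curry i ≠ μ) :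
    ∑ p ∈ (powersetCard #A univ ×ˢ rowOrbit t).filter (fun p => ∀ i ∈ p.1, p.2.curry i = 0),
      monomial (rowsOn p.1 μ + p.2) (1 : K) = orbitSum K (rowsOn A μ + t) := by
  have hμ_orbit : ∀ s ∈ rowOrbit t, ∀ i, s.curry i ≠ μ := fun s hs i => by
    obtain ⟨j, hj⟩ := exists_curry_eq_of_mem_rowOrbit hs i
    exact hj ▸ hμ j
  refine Finset.sum_bij (fun p _ => rowsOn p.1 μ + p.2) ?_ ?_ ?_ (fun _ _ => rfl) <;>
    simp only [Finset.mem_filter, Finset.mem_product, mem_powersetCard_univ]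
  · rintro ⟨S, s⟩ ⟨⟨hS, hs⟩, hSs⟩
    refine mem_rowOrbit.2 (add_right_cancel (b := Multiset.replicate #A 0) ?_)
    rw [← hS, rowMultiset_rowsOn_add hSs, hS, rowMultiset_rowsOn_add hA, mem_rowOrbit.1 hs]
  · rintro ⟨S, s⟩ ⟨⟨-, hs⟩, hSs⟩ ⟨S', s'⟩ ⟨⟨-, hs'⟩, hSs'⟩ h
    have hSS' : S = S' := Finset.ext fun i => by
      rw [mem_iff_curry_rowsOn_add_eq hSs (hμ_orbit s hs), mem_iff_curry_rowsOn_add_eq hSs'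
        (hμ_orbit s' hs'), show rowsOn S μ + s = rowsOn S' μ + s' from h]
    subst hSS'
    exact Prod.ext rfl (add_left_cancel h)
  · intro u hu
    obtain ⟨σ, rfl⟩ := exists_permRows_eq_iff.2 (mem_rowOrbit.1 hu)
    refine ⟨(A.map σ.toEmbedding, permRows σ t), ⟨⟨card_map _, permRows_mem_rowOrbit σ t⟩,
      fun i hi => ?_⟩, by rw [permRows_add, permRows_rowsOn]⟩
    rw [permRows_curry]
    exact hA _ (Finset.mem_map_equiv.1 hi)

theorem card_support_curry_rowsOn_add_lt {S : Finset ι} {s : ι × κ →₀ ℕ} (hS : #S = #A)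
    (hs : s ∈ rowOrbit t) (hμ : μ ≠ 0) (hA : ∀ i ∈ A, t.curry i = 0)
    (hSs : ¬ ∀ i ∈ S, s.curry i = 0) :
    #(rowsOn S μ + s).curry.support < #(rowsOn A μ + t).curry.support := by
  classical
  obtain ⟨i, hiS, hi⟩ := not_forall₂.1 hSs
  have hsub : (rowsOn S μ + s).curry.support ⊆ S ∪ s.curry.support := by
    rw [Finsupp.curry_add]
    refine Finsupp.support_add.trans (union_subset_union (fun j hj => ?_) subset_rfl)
    by_contra h
    exact Finsupp.mem_support_iff.1 hj (curry_rowsOn_of_notMem h μ)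
  have hinter : 0 < #(S ∩ s.curry.support) :=
    card_pos.2 ⟨i, mem_inter.2 ⟨hiS, Finsupp.mem_support_iff.2 hi⟩⟩
  have := card_union_add_card_inter S s.curry.support
  have := card_le_card hsub
  rw [card_support_curry_rowsOn_add hμ hA,
    ← card_support_curry_eq_of_rowMultiset_eq (mem_rowOrbit.1 hs)]
  omega

theorem exists_eq_rowsOn_add (ht : t ≠ 0) :
    ∃ (μ : κ →₀ ℕ) (A : Finset ι) (t' : ι × κ →₀ ℕ), μ ≠ 0 ∧ A.Nonempty ∧
      (∀ i ∈ A, t'.curry i = 0) ∧ (∀ i, t'.curry i ≠ μ) ∧ t = rowsOn A μ + t' := by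
  classical
  obtain ⟨i₀, h⟩ := Finsupp.ne_iff.1 (Finsupp.curryEquiv.injective.ne ht)
  set μ := t.curry i₀
  have hrow : ∀ i, (t.filter fun x => t.curry x.1 ≠ μ).curry i =
      if t.curry i ≠ μ then t.curry i else 0 := fun i => by
    rw [Finsupp.filter_curry t (fun i => t.curry i ≠ μ), Finsupp.filter_apply]
  refine ⟨μ, univ.filter (t.curry · = μ), t.filter fun x => t.curry x.1 ≠ μ, h,
    ⟨i₀, by simp [μ]⟩, fun i hi => by simp_all, fun i => ?_, ?_⟩
  · rw [hrow]
    split_ifs with hi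
    exacts [hi, Ne.symm h]
  · refine Finsupp.curryEquiv.injective (Finsupp.ext fun i => ?_)
    simp only [Finsupp.curryEquiv_apply, Finsupp.curry_add, Finsupp.add_apply, hrow]
    by_cases hi : t.curry i = μ
    · rw [curry_rowsOn_of_mem (by simpa using hi)]
      simp [hi]
    · rw [curry_rowsOn_of_notMem (by simpa using hi)]
      simp [hi]

open Classical in
theorem orbitSum_mem {S : Subalgebra K (MvPolynomial (ι × κ) K)}
    (hS : ∀ k ∈ Icc 1 (Fintype.card ι), ∀ μ, multiEsymm ι k (monomial μ (1 : K)) ∈ S)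
    (t : ι × κ →₀ ℕ) : orbitSum K t ∈ S := by
  induction hN : #t.curry.support using Nat.strong_induction_on generalizing t with
  | _ N ih =>
  obtain rfl | ht := eq_or_ne t 0
  · rw [orbitSum_zero]
    exact S.one_mem
  obtain ⟨μ, A, t, hμ, hAne, hA, hμt, rfl⟩ := exists_eq_rowsOn_add ht
  set P := powersetCard #A (univ : Finset ι) ×ˢ rowOrbit t
  set Q := fun p : Finset ι × (ι × κ →₀ ℕ) => ∀ i ∈ p.1, p.2.curry i = 0
  set R := ∑ p ∈ P.filter (¬ Q ·), monomial (rowsOn p.1 μ + p.2) (1 : K)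
  have hsplit : multiEsymm ι #A (monomial μ 1) * orbitSum K t =
      orbitSum K (rowsOn A μ + t) + R := by
    rw [multiEsymm_monomial_mul_orbitSum, ← sum_filter_add_sum_filter_not P Q,
      sum_rowsOn_add_eq_orbitSum hA hμt]
  have hR : R ∈ S := by
    refine IsMultisymmetric.mem_of_orbitSum_mem (fun σ => ?_) fun u hu => ih _ ?_ u rfl
    · rw [eq_sub_of_add_eq' hsplit.symm, map_sub, map_mul, isMultisymmetric_multiEsymm _ _ σ,
        isMultisymmetric_orbitSum _ σ, isMultisymmetric_orbitSum _ σ]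
    · obtain ⟨p, hp, hu⟩ := Finset.mem_biUnion.1 (support_sum hu)
      rw [Finset.mem_filter, Finset.mem_product, mem_powersetCard_univ] at hp
      rw [Finset.mem_singleton.1 (support_monomial_subset hu), ← hN]
      exact card_support_curry_rowsOn_add_lt hp.1.1 hp.1.2 hμ hA hp.2
  have hlt : #t.curry.support < N := by
    rw [← hN, card_support_curry_rowsOn_add hμ hA]
    have := card_pos.2 hAne
    omega
  rw [eq_sub_of_add_eq hsplit.symm]
  exact sub_mem (mul_mem (hS _ (mem_Icc.2 ⟨card_pos.2 hAne, card_le_univ A⟩) μ)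
    (ih _ hlt t rfl)) hR

theorem multisymmetricSubalgebra_le_adjoin_multiEsymm_monomial :
    multisymmetricSubalgebra K ι κ ≤ Algebra.adjoin K
      {p | ∃ k ∈ Icc 1 (Fintype.card ι), ∃ μ, p = multiEsymm ι k (monomial μ (1 : K))} :=
  fun _ hp => IsMultisymmetric.mem_of_orbitSum_mem hp fun t _ =>
    orbitSum_mem (fun k hk μ => Algebra.subset_adjoin <| by exact ⟨k, hk, μ, rfl⟩) t

theorem adjoin_multiEsymm :
    Algebra.adjoin K {p | ∃ f : MvPolynomial κ K, ∃ k ∈ Icc 1 (Fintype.card ι),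
      p = multiEsymm ι k f} = multisymmetricSubalgebra K ι κ :=
  le_antisymm (Algebra.adjoin_le fun _ ⟨f, k, _, hp⟩ => hp ▸ isMultisymmetric_multiEsymm k f)
    (multisymmetricSubalgebra_le_adjoin_multiEsymm_monomial.trans
      (Algebra.adjoin_mono <| by rintro _ ⟨k, hk, μ, rfl⟩; exact ⟨_, k, hk, rfl⟩))

end ElementaryMultisymmetric

end MvPolynomial

theorem Matrix.neg_one_pow_mul_coeff_charpoly_diagonal {ι R : Type*} [Fintype ι] [DecidableEq ι]
    [CommRing R] (d : ι → R) {k : ℕ} (hk : k ≤ Fintype.card ι) :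
    (-1) ^ k * (diagonal d).charpoly.coeff (Fintype.card ι - k) = (univ.val.map d).esymm k := by
  rw [charpoly_diagonal, prod_eq_multiset_prod,
    ← Function.comp_def (fun r => Polynomial.X - Polynomial.C r) d, ← Multiset.map_map,
    Multiset.prod_X_sub_C_coeff _ (by simp), Multiset.card_map, card_val, card_univ,
    Nat.sub_sub_self hk, ← mul_assoc, ← mul_pow]
  simp

section matEval

variable {K R B : Type*} [CommRing K] [CommRing R] [CommRing B] [Algebra K R] [Algebra K B]
  {n m : ℕ} {M : Fin m → Matrix (Fin n) (Fin n) R}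
  (hM : ∀ a ∈ Set.range M, ∀ b ∈ Set.range M, a * b = b * a)

theorem matEval_X (k : Fin m) : matEval (K := K) M hM (X k) = M k := by
  simp [matEval]

theorem map_matEval_of_map_eq_diagonal (φ : R →ₐ[K] B) {x : Fin n → Fin m → B}
    (hφ : ∀ k, (M k).map φ = diagonal fun i => x i k) (f : MvPolynomial (Fin m) K) :
    (matEval M hM f).map φ = diagonal fun i => aeval (x i) f := by
  have : φ.mapMatrix.comp (matEval M hM) =
      (diagonalAlgHom K).comp (AlgHom.pi fun i => aeval (x i)) :=
    algHom_ext fun k => by simp [matEval_X, hφ]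
  exact AlgHom.congr_fun this f

theorem map_neg_one_pow_mul_coeff_charpoly_matEval (φ : R →ₐ[K] B) {x : Fin n → Fin m → B}
    (hφ : ∀ k, (M k).map φ = diagonal fun i => x i k) (f : MvPolynomial (Fin m) K) {k : ℕ}
    (hk : k ≤ n) :
    φ ((-1) ^ k * (matEval M hM f).charpoly.coeff (n - k)) =
      aeval (fun i => aeval (x i) f) (esymm (Fin n) K k) := by
  rw [aeval_esymm_eq_multiset_esymm, ← neg_one_pow_mul_coeff_charpoly_diagonal _ (by simpa),
    ← map_matEval_of_map_eq_diagonal hM φ hφ, Fintype.card_fin, ← φ.coe_toRingHom,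
    charpoly_map, Polynomial.coeff_map]
  simp

end matEval

end

theorem stmt4_general (K : Type*) [CommRing K] (n m : ℕ)
    (ξ : Fin m → Matrix (Fin n) (Fin n) (MvPolynomial (Fin m × Fin n × Fin n) K))
    (hξ : ξ = fun k => Matrix.of fun i j => MvPolynomial.X (k, i, j))
    (I : Ideal (MvPolynomial (Fin m × Fin n × Fin n) K))
    (ξ' : Fin m → Matrix (Fin n) (Fin n) (MvPolynomial (Fin m × Fin n × Fin n) K ⧸ I))
    (hξ' : ξ' = fun k => (ξ k).map (Ideal.Quotient.mk I))
    (hcomm : ∀ a ∈ Set.range ξ', ∀ b ∈ Set.range ξ', a * b = b * a)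
    (Δ' : (MvPolynomial (Fin m × Fin n × Fin n) K ⧸ I) →ₐ[K]
      MvPolynomial (Fin n × Fin m) K)
    (hΔ' : ∀ p : Fin m × Fin n × Fin n,
      Δ' (Ideal.Quotient.mk I (MvPolynomial.X p)) =
        if p.2.1 = p.2.2 then MvPolynomial.X (p.2.1, p.1) else 0)
    (CP : Subalgebra K (MvPolynomial (Fin m × Fin n × Fin n) K ⧸ I))
    (hCP : CP = Algebra.adjoin K
      {a | ∃ f : MvPolynomial (Fin m) K, ∃ k ∈ Finset.Icc 1 n,
        a = (-1) ^ k * (matEval ξ' hcomm f).charpoly.coeff (n - k)}) :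
    Δ' '' (CP : Set (MvPolynomial (Fin m × Fin n × Fin n) K ⧸ I)) =
      {d | ∀ σ : Equiv.Perm (Fin n),
        MvPolynomial.rename (fun p : Fin n × Fin m => (σ p.1, p.2)) d = d} := by
  have hdiag : ∀ k, (ξ' k).map Δ' = diagonal fun i => X (i, k) := by
    intro k
    ext i j
    simp [hξ', hξ, hΔ', diagonal_apply]
  have hψ : ∀ f k, k ∈ Icc 1 n → Δ' ((-1) ^ k * (matEval ξ' hcomm f).charpoly.coeff (n - k)) =
      multiEsymm (Fin n) k f := fun f k hk => by
    rw [map_neg_one_pow_mul_coeff_charpoly_matEval hcomm Δ' hdiag f (mem_Icc.1 hk).2, multiEsymm]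
    simp only [rename_eq_aeval]
    rfl
  have hgen : Δ' '' {a | ∃ f : MvPolynomial (Fin m) K, ∃ k ∈ Icc 1 n,
        a = (-1) ^ k * (matEval ξ' hcomm f).charpoly.coeff (n - k)} =
      {d | ∃ f : MvPolynomial (Fin m) K, ∃ k ∈ Icc 1 (Fintype.card (Fin n)),
        d = multiEsymm (Fin n) k f} := by
    ext d
    rw [Fintype.card_fin]
    constructor
    · rintro ⟨_, ⟨f, k, hk, rfl⟩, rfl⟩
      exact ⟨f, k, hk, hψ f k hk⟩
    · rintro ⟨f, k, hk, rfl⟩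
      exact ⟨_, ⟨f, k, hk, rfl⟩, hψ f k hk⟩
  rw [hCP, ← Subalgebra.coe_map, AlgHom.map_adjoin, hgen, adjoin_multiEsymm]
  rfl

/-- `Δ' : A_P → D` maps the subalgebra `C_P` generated by the
characteristic polynomial coefficients `ψ_k(f)` of polynomials `f` in the generic
commuting matrices surjectively onto the ring of multisymmetric functions `D^{Sₙ}`:
the image of `C_P` under `Δ'` equals the set of `Sₙ`-invariants of `D`. -/
theorem stmt4 (K : Type*) [CommRing K] (n m : ℕ)
    (ξ : Fin m → Matrix (Fin n) (Fin n) (MvPolynomial (Fin m × Fin n × Fin n) K))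
    (hξ : ξ = fun k => Matrix.of fun i j => MvPolynomial.X (k, i, j))
    (I : Ideal (MvPolynomial (Fin m × Fin n × Fin n) K))
    (hI : I = Ideal.span {a | ∃ k h i j, a = (ξ k * ξ h - ξ h * ξ k) i j})
    (ξ' : Fin m → Matrix (Fin n) (Fin n) (MvPolynomial (Fin m × Fin n × Fin n) K ⧸ I))
    (hξ' : ξ' = fun k => (ξ k).map (Ideal.Quotient.mk I))
    (hcomm : ∀ a ∈ Set.range ξ', ∀ b ∈ Set.range ξ', a * b = b * a)
    (Δ' : (MvPolynomial (Fin m × Fin n × Fin n) K ⧸ I) →ₐ[K]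
      MvPolynomial (Fin n × Fin m) K)
    (hΔ' : ∀ p : Fin m × Fin n × Fin n,
      Δ' (Ideal.Quotient.mk I (MvPolynomial.X p)) =
        if p.2.1 = p.2.2 then MvPolynomial.X (p.2.1, p.1) else 0)
    (CP : Subalgebra K (MvPolynomial (Fin m × Fin n × Fin n) K ⧸ I))
    (hCP : CP = Algebra.adjoin K
      {a | ∃ f : MvPolynomial (Fin m) K, ∃ k ∈ Finset.Icc 1 n,
        a = (-1) ^ k * (matEval ξ' hcomm f).charpoly.coeff (n - k)}) :
    Δ' '' (CP : Set (MvPolynomial (Fin m × Fin n × Fin n) K ⧸ I)) =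
      {d | ∀ σ : Equiv.Perm (Fin n),
        MvPolynomial.rename (fun p : Fin n × Fin m => (σ p.1, p.2)) d = d} :=
  stmt4_general K n m ξ hξ I ξ' hξ' hcomm Δ' hΔ' CP hCP
end

section
/- Let K be a commutative ring. The restriction of Δ' : A_P → D to the invariant ring A_P^{GL(n,K)} is a surjection onto the ring of multisymmetric functions D^{S_n}. Likewise the restriction of Δ : A → D to A^{GL(n,K)} surjects onto D^{S_n}. -/
/-!
Write `x_i^μ = ∏ₖ x_{ik}^{μ k}` for the monomial of row `i` with exponent `μ`, and `e_a(μ)` for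
the `a`-th elementary symmetric polynomial in `x_1^μ, …, x_n^μ`.

Since `Δ` sends each generic matrix `ξ_k` to `diag(x_{1k}, …, x_{nk})`, it sends the
conjugation-invariant `(-1)^a` times the coefficient of `t^(n-a)` in the characteristic
polynomial of `ξ_1^{μ_1} ⋯ ξ_m^{μ_m}` to `e_a(μ)`. It remains to see that the `e_a(μ)` generate
the multisymmetric polynomials as a `K`-algebra, by an argument that never divides and so works
over any commutative ring. Grade monomials by the number of nonzero rows of their exponent.
A product `∏_μ e_{w μ}(μ)` with `w 0 = 0` lives in degrees at most `∑_μ w μ`, and in that top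
degree its coefficient is `1` on the monomials whose multiset of nonzero rows is `w` and `0`
elsewhere. Subtracting a multiple of it from a multisymmetric `d` thus removes a whole
`Sₙ`-orbit of top-degree monomials of `d` and creates no new ones, so induction concludes.
-/

open MvPolynomial Finset

namespace Finsupp

variable {α β : Type*}

lemma curry_add_s9 {M : Type*} [AddZeroClass M] (f g : α × β →₀ M) :
    (f + g).curry = f.curry + g.curry :=
  map_add curryAddEquiv f g

lemma curry_tsub (f g : α × β →₀ ℕ) : (f - g).curry = f.curry - g.curry := by
  ext; simp

end Finsupp

namespace Multisymmetric

section Rows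

variable {ι σ : Type*}

noncomputable def rowCount (f : ι × σ →₀ ℕ) : ℕ := #f.curry.support

/-- The nonzero rows `f.curry i` of `f`, counted with multiplicity. -/
noncomputable def rowType (f : ι × σ →₀ ℕ) : (σ →₀ ℕ) →₀ ℕ :=
  ∑ i ∈ f.curry.support, Finsupp.single (f.curry i) 1

lemma rowCount_le_card [Fintype ι] (f : ι × σ →₀ ℕ) : rowCount f ≤ Fintype.card ι :=
  card_le_univ _

lemma rowCount_eq_zero {f : ι × σ →₀ ℕ} : rowCount f = 0 ↔ f = 0 := by
  rw [rowCount, card_eq_zero, Finsupp.support_eq_empty, ← Finsupp.coe_curryAddEquiv,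
    AddEquivClass.map_eq_zero_iff]

lemma rowCount_add_le (f g : ι × σ →₀ ℕ) : rowCount (f + g) ≤ rowCount f + rowCount g := by
  classical
  rw [rowCount, Finsupp.curry_add_s9]
  exact (card_le_card Finsupp.support_add).trans (card_union_le _ _)

lemma degree_rowType (f : ι × σ →₀ ℕ) : (rowType f).degree = rowCount f := by
  simp [rowType, rowCount, map_sum, Finsupp.degree_single]

lemma rowType_apply_zero (f : ι × σ →₀ ℕ) : rowType f 0 = 0 := by
  refine (Finsupp.finsetSum_apply _ _ _).trans (sum_eq_zero fun i hi => ?_)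
  exact Finsupp.single_eq_of_ne (Finsupp.mem_support_iff.1 hi).symm

lemma rowType_apply [Fintype ι] [DecidableEq σ] (f : ι × σ →₀ ℕ) {μ : σ →₀ ℕ} (hμ : μ ≠ 0) :
    rowType f μ = #{i | f.curry i = μ} := by
  rw [rowType, Finsupp.finsetSum_apply, card_filter]
  refine sum_subset (subset_univ _) (fun i _ hi => ?_) |>.trans (sum_congr rfl fun i _ => ?_)
  · rw [Finsupp.notMem_support_iff.1 hi, Finsupp.single_eq_of_ne hμ]
  · simp [Finsupp.single_apply]

lemma rowType_add_of_disjoint {f g : ι × σ →₀ ℕ}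
    (h : Disjoint f.curry.support g.curry.support) :
    rowType (f + g) = rowType f + rowType g := by
  classical
  rw [rowType, rowType, rowType, Finsupp.curry_add_s9, Finsupp.support_add_eq h, sum_union h]
  congr 1 <;> refine sum_congr rfl fun i hi => ?_
  · simp [Finsupp.notMem_support_iff.1 (disjoint_left.1 h hi)]
  · simp [Finsupp.notMem_support_iff.1 (disjoint_right.1 h hi)]

noncomputable def blockExp (T : Finset ι) (μ : σ →₀ ℕ) : ι × σ →₀ ℕ :=
  (∑ i ∈ T, Finsupp.single i μ).uncurry

lemma curry_blockExp_apply [DecidableEq ι] (T : Finset ι) (μ : σ →₀ ℕ) (i : ι) :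
    (blockExp T μ).curry i = if i ∈ T then μ else 0 := by
  simp [blockExp, Finsupp.finsetSum_apply, Finsupp.single_apply]

lemma support_curry_blockExp (T : Finset ι) {μ : σ →₀ ℕ} (hμ : μ ≠ 0) :
    (blockExp T μ).curry.support = T := by
  classical
  ext i
  rw [Finsupp.mem_support_iff, curry_blockExp_apply]
  by_cases hi : i ∈ T <;> simp [hi, hμ]

lemma support_curry_blockExp_subset (T : Finset ι) (μ : σ →₀ ℕ) :
    (blockExp T μ).curry.support ⊆ T := fun i hi => by
  classical
  by_contra hiT
  rw [Finsupp.mem_support_iff, curry_blockExp_apply, if_neg hiT] at hi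
  exact hi rfl

lemma rowCount_blockExp_le (T : Finset ι) (μ : σ →₀ ℕ) : rowCount (blockExp T μ) ≤ #T :=
  card_le_card (support_curry_blockExp_subset T μ)

lemma disjoint_of_le_rowCount_blockExp_add {T : Finset ι} {μ : σ →₀ ℕ} {y : ι × σ →₀ ℕ} {b : ℕ}
    (hy : rowCount y ≤ b) (h : #T + b ≤ rowCount (blockExp T μ + y)) :
    Disjoint T y.curry.support ∧ rowCount y = b := by
  classical
  have hsub : (blockExp T μ + y).curry.support ⊆ T ∪ y.curry.support := by
    rw [Finsupp.curry_add_s9]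
    exact Finsupp.support_add.trans (union_subset_union_left (support_curry_blockExp_subset T μ))
  have hunion := card_union_le T y.curry.support
  have hle := card_le_card hsub
  unfold rowCount at *
  exact ⟨card_union_eq_card_add_card.1 (by omega), by omega⟩

lemma rowType_blockExp (T : Finset ι) {μ : σ →₀ ℕ} (hμ : μ ≠ 0) :
    rowType (blockExp T μ) = Finsupp.single μ #T := by
  classical
  rw [rowType, support_curry_blockExp T hμ, card_eq_sum_ones, Finsupp.single_finsetSum]
  exact sum_congr rfl fun i hi => by rw [curry_blockExp_apply, if_pos hi]

lemma blockExp_injective {μ : σ →₀ ℕ} (hμ : μ ≠ 0) :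
    Function.Injective fun T : Finset ι => blockExp T μ := fun S T h => by
  rw [← support_curry_blockExp S hμ, ← support_curry_blockExp T hμ]
  exact congrArg (fun f => f.curry.support) h

section Fiber

variable [Fintype ι] [DecidableEq σ]

noncomputable def rowFiber (f : ι × σ →₀ ℕ) (μ : σ →₀ ℕ) : Finset ι := {i | f.curry i = μ}

lemma blockExp_rowFiber_le (f : ι × σ →₀ ℕ) (μ : σ →₀ ℕ) : blockExp (rowFiber f μ) μ ≤ f := by
  classical
  rintro ⟨i, k⟩
  rw [← Finsupp.curry_apply, curry_blockExp_apply]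
  split_ifs with hi
  · rw [(mem_filter.1 hi).2.symm, Finsupp.curry_apply]
  · exact Nat.zero_le _

lemma rowType_eq_single_add (f : ι × σ →₀ ℕ) {μ : σ →₀ ℕ} (hμ : μ ≠ 0) :
    rowType f = Finsupp.single μ #(rowFiber f μ) + rowType (f - blockExp (rowFiber f μ) μ) := by
  classical
  have hdisj : Disjoint (blockExp (rowFiber f μ) μ).curry.support
      (f - blockExp (rowFiber f μ) μ).curry.support := by
    rw [support_curry_blockExp _ hμ, disjoint_left]
    intro i hi
    rw [Finsupp.notMem_support_iff, Finsupp.curry_tsub, Finsupp.tsub_apply, curry_blockExp_apply,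
      if_pos hi, (mem_filter.1 hi).2, tsub_self]
  conv_lhs => rw [← add_tsub_cancel_of_le (blockExp_rowFiber_le f μ)]
  rw [rowType_add_of_disjoint hdisj, rowType_blockExp _ hμ]

lemma rowFiber_blockExp_add {T : Finset ι} {μ : σ →₀ ℕ} {y : ι × σ →₀ ℕ} (hμ : μ ≠ 0)
    (hT : Disjoint T y.curry.support) (hy : rowType y μ = 0) :
    rowFiber (blockExp T μ + y) μ = T := by
  classical
  ext i
  rw [rowFiber, mem_filter, Finsupp.curry_add_s9, Finsupp.add_apply, curry_blockExp_apply]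
  by_cases hi : i ∈ T
  · simp [hi, Finsupp.notMem_support_iff.1 (disjoint_left.1 hT hi)]
  · rw [rowType_apply y hμ, card_eq_zero, filter_eq_empty_iff] at hy
    simpa [hi] using hy (mem_univ i)

end Fiber

end Rows

section ElementaryMultisymmetric

variable {ι σ K : Type*} [CommSemiring K]

noncomputable def rowMonomial (μ : σ →₀ ℕ) (i : ι) : MvPolynomial (ι × σ) K :=
  monomial (Finsupp.single i μ).uncurry 1

lemma rename_rowMonomial (τ : Equiv.Perm ι) (μ : σ →₀ ℕ) (i : ι) :
    rename (fun p : ι × σ => (τ p.1, p.2)) (rowMonomial μ i : MvPolynomial (ι × σ) K) =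
      rowMonomial μ (τ i) := by
  rw [rowMonomial, rowMonomial, rename_monomial]
  refine congrArg (monomial · 1) ?_
  ext ⟨j, k⟩
  classical
  obtain ⟨j, rfl⟩ := τ.surjective j
  have hinj : Function.Injective fun p : ι × σ => (τ p.1, p.2) := fun p q h => by
    simpa [Prod.ext_iff] using h
  rw [show ((τ j, k) : ι × σ) = (fun p : ι × σ => (τ p.1, p.2)) (j, k) from rfl,
    Finsupp.mapDomain_apply hinj]
  simp [Finsupp.single_apply]

lemma rowMonomial_eq_prod [Fintype σ] (μ : σ →₀ ℕ) (i : ι) :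
    (rowMonomial μ i : MvPolynomial (ι × σ) K) = ∏ k, X (i, k) ^ μ k := by
  have : (Finsupp.single i μ).uncurry = ∑ k, Finsupp.single (i, k) (μ k) := by
    classical
    ext ⟨j, k⟩
    by_cases h : i = j
    · subst h
      simp [Finsupp.finsetSum_apply, Finsupp.single_apply]
    · simp [Finsupp.finsetSum_apply, h]
  simp only [rowMonomial, this, monomial_sum_one, X_pow_eq_monomial]

variable [Fintype ι]

variable (K) in
noncomputable def multiEsymm (a : ℕ) (μ : σ →₀ ℕ) : MvPolynomial (ι × σ) K :=
  aeval (rowMonomial μ) (esymm ι K a)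

lemma multiEsymm_eq_sum (a : ℕ) (μ : σ →₀ ℕ) :
    multiEsymm K a μ = ∑ T ∈ powersetCard a (univ : Finset ι), monomial (blockExp T μ) (1 : K) := by
  rw [multiEsymm, aeval_esymm_eq_multiset_esymm, esymm_map_val]
  refine sum_congr rfl fun T _ => ?_
  rw [blockExp, ← Finsupp.curryAddEquiv_symm_apply, map_sum, monomial_sum_one]
  rfl

lemma exists_blockExp_of_coeff_multiEsymm_ne_zero {a : ℕ} {μ : σ →₀ ℕ} {f : ι × σ →₀ ℕ}
    (h : coeff f (multiEsymm K a μ) ≠ 0) : ∃ T : Finset ι, #T = a ∧ blockExp T μ = f := by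
  classical
  rw [multiEsymm_eq_sum, coeff_sum] at h
  obtain ⟨T, hT, hne⟩ := exists_ne_zero_of_sum_ne_zero h
  refine ⟨T, (mem_powersetCard.1 hT).2, ?_⟩
  by_contra hf
  exact hne (by rw [coeff_monomial, if_neg hf])

lemma coeff_blockExp_multiEsymm {a : ℕ} {μ : σ →₀ ℕ} (hμ : μ ≠ 0) {T : Finset ι} (hT : #T = a) :
    coeff (blockExp T μ) (multiEsymm K a μ) = 1 := by
  classical
  rw [multiEsymm_eq_sum, coeff_sum, sum_eq_single_of_mem T (mem_powersetCard.2 ⟨subset_univ T, hT⟩)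
    fun S _ hST => by rw [coeff_monomial, if_neg ((blockExp_injective hμ).ne hST)],
    coeff_monomial, if_pos rfl]

lemma rename_multiEsymm (τ : Equiv.Perm ι) (a : ℕ) (μ : σ →₀ ℕ) :
    rename (fun p : ι × σ => (τ p.1, p.2)) (multiEsymm K a μ) = multiEsymm K a μ := by
  rw [multiEsymm, ← AlgHom.comp_apply, comp_aeval]
  simp only [rename_rowMonomial]
  conv_rhs => rw [← rename_esymm ι K a τ]
  rw [aeval_rename]
  rfl

variable (K) in
noncomputable def multiEsymmProd (w : (σ →₀ ℕ) →₀ ℕ) : MvPolynomial (ι × σ) K :=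
  w.prod fun μ a => multiEsymm K a μ

lemma multiEsymm_zero (μ : σ →₀ ℕ) : multiEsymm K 0 μ = (1 : MvPolynomial (ι × σ) K) := by
  rw [multiEsymm, esymm_zero, map_one]

lemma multiEsymmProd_single_add {μ : σ →₀ ℕ} {a : ℕ} {w : (σ →₀ ℕ) →₀ ℕ} (hμ : w μ = 0)
    (ha : a ≠ 0) :
    multiEsymmProd K (Finsupp.single μ a + w) =
      multiEsymm K a μ * (multiEsymmProd K w : MvPolynomial (ι × σ) K) := by
  classical
  rw [multiEsymmProd, Finsupp.prod_add_index_of_disjoint,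
    Finsupp.prod_single_index (multiEsymm_zero μ)]
  · rfl
  · rw [Finsupp.support_single _ ha, disjoint_singleton_left, Finsupp.notMem_support_iff]
    exact hμ

lemma rowCount_le_of_coeff_multiEsymmProd_ne_zero {w : (σ →₀ ℕ) →₀ ℕ} {f : ι × σ →₀ ℕ}
    (h : coeff f (multiEsymmProd K w) ≠ 0) : rowCount f ≤ w.degree := by
  classical
  induction w using Finsupp.induction generalizing f with
  | zero =>
    rw [multiEsymmProd, Finsupp.prod_zero_index, coeff_one, ite_ne_right_iff] at h
    rw [← h.1, rowCount_eq_zero.2 rfl]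
    exact Nat.zero_le _
  | single_add μ a w hμ ha ih =>
    rw [multiEsymmProd_single_add (Finsupp.notMem_support_iff.1 hμ) ha, coeff_mul] at h
    obtain ⟨⟨x, y⟩, hxy, hne⟩ := exists_ne_zero_of_sum_ne_zero h
    obtain ⟨T, hT, rfl⟩ := exists_blockExp_of_coeff_multiEsymm_ne_zero (left_ne_zero_of_mul hne)
    rw [← HasAntidiagonal.mem_antidiagonal.1 hxy, map_add, Finsupp.degree_single]
    calc rowCount (blockExp T μ + y) ≤ rowCount (blockExp T μ) + rowCount y := rowCount_add_le _ _
      _ ≤ a + w.degree :=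
        add_le_add (hT ▸ rowCount_blockExp_le T μ) (ih (right_ne_zero_of_mul hne))

variable [DecidableEq σ]

lemma eq_blockExp_rowFiber_of_coeff_mul_ne_zero {μ : σ →₀ ℕ} {a : ℕ} {w : (σ →₀ ℕ) →₀ ℕ}
    (hμ : μ ≠ 0) (hwμ : w μ = 0)
    (hcoeff : ∀ y : ι × σ →₀ ℕ, rowCount y = w.degree →
      coeff y (multiEsymmProd K w) = if rowType y = w then 1 else 0)
    {x y : ι × σ →₀ ℕ} (hf : rowCount (x + y) = a + w.degree)
    (hne : coeff x (multiEsymm K a μ) * coeff y (multiEsymmProd K w) ≠ 0) :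
    x = blockExp (rowFiber (x + y) μ) μ ∧ rowType (x + y) = Finsupp.single μ a + w := by
  obtain ⟨T, hT, rfl⟩ := exists_blockExp_of_coeff_multiEsymm_ne_zero (left_ne_zero_of_mul hne)
  obtain ⟨hdisj, hy⟩ := disjoint_of_le_rowCount_blockExp_add
    (rowCount_le_of_coeff_multiEsymmProd_ne_zero (right_ne_zero_of_mul hne)) (by rw [hf, hT])
  have hty : rowType y = w := by
    by_contra h
    exact right_ne_zero_of_mul hne (by rw [hcoeff y hy, if_neg h])
  refine ⟨by rw [rowFiber_blockExp_add hμ hdisj (hty ▸ hwμ)], ?_⟩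
  rw [rowType_add_of_disjoint (by rwa [support_curry_blockExp T hμ]), rowType_blockExp T hμ,
    hT, hty]

lemma coeff_multiEsymm_mul_of_rowCount_eq {μ : σ →₀ ℕ} {a : ℕ} {w : (σ →₀ ℕ) →₀ ℕ}
    (hμ : μ ≠ 0) (hwμ : w μ = 0)
    (hcoeff : ∀ y : ι × σ →₀ ℕ, rowCount y = w.degree →
      coeff y (multiEsymmProd K w) = if rowType y = w then 1 else 0)
    {f : ι × σ →₀ ℕ} (hf : rowCount f = a + w.degree) :
    coeff f (multiEsymm K a μ * multiEsymmProd K w) =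
      if rowType f = Finsupp.single μ a + w then 1 else 0 := by
  classical
  have term : ∀ p ∈ antidiagonal f,
      coeff p.1 (multiEsymm K a μ) * coeff p.2 (multiEsymmProd K w) ≠ 0 →
      p.1 = blockExp (rowFiber f μ) μ ∧ rowType f = Finsupp.single μ a + w := by
    rintro ⟨x, y⟩ hxy hne
    obtain rfl := HasAntidiagonal.mem_antidiagonal.1 hxy
    exact eq_blockExp_rowFiber_of_coeff_mul_ne_zero hμ hwμ hcoeff hf hne
  rw [coeff_mul]
  split_ifs with hrow
  · set x := blockExp (rowFiber f μ) μ
    have hcard : #(rowFiber f μ) = a := by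
      have := congrArg (· μ) hrow
      simp only [Finsupp.add_apply, Finsupp.single_eq_same, hwμ, add_zero] at this
      rw [← this, rowType_apply f hμ]
      rfl
    have hrest : rowType (f - x) = w := by
      have := rowType_eq_single_add f hμ
      rw [hrow, hcard] at this
      exact (add_left_cancel this).symm
    have hmem : (x, f - x) ∈ antidiagonal f :=
      HasAntidiagonal.mem_antidiagonal.2 (add_tsub_cancel_of_le (blockExp_rowFiber_le f μ))
    rw [sum_eq_single_of_mem (x, f - x) hmem]
    · rw [coeff_blockExp_multiEsymm hμ hcard, hcoeff _ (by rw [← degree_rowType, hrest]),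
        if_pos hrest, one_mul]
    · rintro ⟨x', y'⟩ hxy hne
      by_contra h
      have hx : x' = x := (term _ hxy h).1
      rw [HasAntidiagonal.mem_antidiagonal] at hxy
      exact hne (Prod.ext hx (by rw [← hxy, hx, add_tsub_cancel_left]))
  · exact sum_eq_zero fun p hp => by_contra fun h => hrow (term p hp h).2

lemma coeff_multiEsymmProd_of_rowCount_eq {w : (σ →₀ ℕ) →₀ ℕ} (hw : w 0 = 0)
    {f : ι × σ →₀ ℕ} (hf : rowCount f = w.degree) :
    coeff f (multiEsymmProd K w) = if rowType f = w then 1 else 0 := by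
  classical
  induction w using Finsupp.induction generalizing f with
  | zero =>
    obtain rfl := rowCount_eq_zero.1 (by simpa using hf)
    simp [multiEsymmProd, rowType]
  | single_add μ a w hμ ha ih =>
    have hμ0 : μ ≠ 0 := by
      rintro rfl
      rw [Finsupp.add_apply, Finsupp.single_eq_same] at hw
      omega
    have hw0 : w 0 = 0 := by simpa [Finsupp.single_apply, Ne.symm hμ0] using hw
    rw [multiEsymmProd_single_add (Finsupp.notMem_support_iff.1 hμ) ha]
    rw [map_add, Finsupp.degree_single] at hf
    exact coeff_multiEsymm_mul_of_rowCount_eq hμ0 (Finsupp.notMem_support_iff.1 hμ)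
      (fun y hy => ih hw0 hy) hf

end ElementaryMultisymmetric

section Generation

variable {ι σ K : Type*} [CommRing K]

variable (ι σ K) in
noncomputable def multisymmetricSubalgebra : Subalgebra K (MvPolynomial (ι × σ) K) :=
  ⨅ τ : Equiv.Perm ι, AlgHom.equalizer (rename fun p : ι × σ => (τ p.1, p.2)) (AlgHom.id K _)

lemma mem_multisymmetricSubalgebra {d : MvPolynomial (ι × σ) K} :
    d ∈ multisymmetricSubalgebra ι σ K ↔
      ∀ τ : Equiv.Perm ι, rename (fun p : ι × σ => (τ p.1, p.2)) d = d := by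
  simp [multisymmetricSubalgebra, Algebra.mem_iInf, AlgHom.mem_equalizer]

variable [Fintype ι]

lemma multiEsymmProd_mem_multisymmetricSubalgebra (w : (σ →₀ ℕ) →₀ ℕ) :
    multiEsymmProd K w ∈ multisymmetricSubalgebra ι σ K :=
  Subalgebra.prod_mem _ fun μ _ => mem_multisymmetricSubalgebra.2 fun τ => rename_multiEsymm τ _ μ

lemma exists_perm_of_rowType_eq {f g : ι × σ →₀ ℕ} (h : rowType f = rowType g) :
    ∃ τ : Equiv.Perm ι, ∀ i, g.curry i = f.curry (τ i) := by
  classical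
  have hzero : ∀ f : ι × σ →₀ ℕ, #{i | f.curry i = 0} = Fintype.card ι - rowCount f := by
    intro f
    rw [rowCount, ← card_compl]
    congr 1
    ext i
    rw [mem_filter, mem_compl, Finsupp.mem_support_iff, not_not]
    simp
  have hfib : ∀ μ, #{i | g.curry i = μ} = #{i | f.curry i = μ} := by
    intro μ
    rcases eq_or_ne μ 0 with rfl | hμ
    · rw [hzero, hzero, ← degree_rowType, ← degree_rowType, h]
    · rw [← rowType_apply g hμ, ← rowType_apply f hμ, h]
  let e : ∀ μ, {i // g.curry i = μ} ≃ {i // f.curry i = μ} := fun μ =>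
    Fintype.equivOfCardEq (by rw [Fintype.card_subtype, Fintype.card_subtype, hfib])
  exact ⟨Equiv.ofFiberEquiv e, fun i => (Equiv.ofFiberEquiv_map e i).symm⟩

lemma coeff_eq_of_rowType_eq {d : MvPolynomial (ι × σ) K}
    (hd : d ∈ multisymmetricSubalgebra ι σ K) {f g : ι × σ →₀ ℕ} (h : rowType f = rowType g) :
    coeff f d = coeff g d := by
  obtain ⟨τ, hτ⟩ := exists_perm_of_rowType_eq h
  have hinj : Function.Injective fun p : ι × σ => (τ.symm p.1, p.2) := fun p q h => by
    simpa [Prod.ext_iff] using h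
  have hg : g = f.mapDomain fun p => (τ.symm p.1, p.2) := by
    ext ⟨j, k⟩
    rw [← Finsupp.curry_apply, hτ j, Finsupp.curry_apply,
      show ((j, k) : ι × σ) = (fun p : ι × σ => (τ.symm p.1, p.2)) (τ j, k) by simp,
      Finsupp.mapDomain_apply hinj]
  rw [hg, ← coeff_rename_mapDomain _ hinj, mem_multisymmetricSubalgebra.1 hd τ.symm]

lemma rowCount_le_of_mem_support_sub_leading {d : MvPolynomial (ι × σ) K} {r : ℕ}
    (hr : ∀ g ∈ d.support, rowCount g ≤ r) {f : ι × σ →₀ ℕ} (hf : rowCount f = r) :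
    ∀ g ∈ (d - C (coeff f d) * multiEsymmProd K (rowType f)).support, rowCount g ≤ r := by
  intro g hg
  rw [mem_support_iff, coeff_sub, coeff_C_mul] at hg
  by_cases hdg : coeff g d = 0
  · rw [← hf, ← degree_rowType f]
    exact rowCount_le_of_coeff_multiEsymmProd_ne_zero
      (right_ne_zero_of_mul (by simpa [hdg] using hg))
  · exact hr g (mem_support_iff.2 hdg)

section LeadingTerm

variable [DecidableEq σ]

lemma coeff_sub_leading {d : MvPolynomial (ι × σ) K} (hd : d ∈ multisymmetricSubalgebra ι σ K)
    {f g : ι × σ →₀ ℕ} (hg : rowCount g = rowCount f) :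
    coeff g (d - C (coeff f d) * multiEsymmProd K (rowType f)) =
      if rowType g = rowType f then 0 else coeff g d := by
  rw [coeff_sub, coeff_C_mul,
    coeff_multiEsymmProd_of_rowCount_eq (rowType_apply_zero f) (by rw [degree_rowType, hg])]
  split_ifs with h
  · rw [coeff_eq_of_rowType_eq hd h, mul_one, sub_self]
  · rw [mul_zero, sub_zero]

end LeadingTerm

lemma card_top_sub_leading_lt {d : MvPolynomial (ι × σ) K}
    (hd : d ∈ multisymmetricSubalgebra ι σ K) {f : ι × σ →₀ ℕ} (hf : f ∈ d.support) :
    #{g ∈ (d - C (coeff f d) * multiEsymmProd K (rowType f)).support | rowCount g = rowCount f} <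
      #{g ∈ d.support | rowCount g = rowCount f} := by
  classical
  refine card_lt_card (lt_of_le_of_lt (fun g hg => ?_) (erase_ssubset (mem_filter.2 ⟨hf, rfl⟩)))
  obtain ⟨hg, hgf⟩ := mem_filter.1 hg
  rw [mem_support_iff, coeff_sub_leading hd hgf] at hg
  split_ifs at hg with h
  · exact absurd rfl hg
  · exact mem_erase.2 ⟨fun hgf => h (hgf ▸ rfl), mem_filter.2 ⟨mem_support_iff.2 hg, hgf⟩⟩

theorem mem_adjoin_range_multiEsymm {d : MvPolynomial (ι × σ) K}
    (hd : d ∈ multisymmetricSubalgebra ι σ K) :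
    d ∈ Algebra.adjoin K (Set.range fun p : ℕ × (σ →₀ ℕ) => multiEsymm K p.1 p.2) := by
  classical
  set A := Algebra.adjoin K
    (Set.range fun p : ℕ × (σ →₀ ℕ) => (multiEsymm K p.1 p.2 : MvPolynomial (ι × σ) K))
  have hprod (w : (σ →₀ ℕ) →₀ ℕ) : multiEsymmProd K w ∈ A :=
    Subalgebra.prod_mem _ fun μ _ => Algebra.subset_adjoin ⟨(w μ, μ), rfl⟩
  suffices key : ∀ r d, d ∈ multisymmetricSubalgebra ι σ K →
      (∀ f ∈ d.support, rowCount f < r) → d ∈ A from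
    key _ d hd fun f _ => Nat.lt_succ_of_le (rowCount_le_card f)
  intro r
  induction r with
  | zero =>
    intro d _ hr
    rw [support_eq_empty.1 (eq_empty_of_forall_notMem fun f hf => Nat.not_lt_zero _ (hr f hf))]
    exact zero_mem A
  | succ r ih =>
    intro d hd hr
    induction hN : #{f ∈ d.support | rowCount f = r} using Nat.strong_induction_on
      generalizing d with
    | _ N ihN =>
    obtain hempty | ⟨f, hf⟩ := eq_empty_or_nonempty {f ∈ d.support | rowCount f = r}
    · refine ih d hd fun f hf => (Nat.lt_succ_iff.1 (hr f hf)).lt_of_ne fun hfr => ?_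
      exact (filter_eq_empty_iff.1 hempty) hf hfr
    · obtain ⟨hfd, rfl⟩ := mem_filter.1 hf
      set lead : MvPolynomial (ι × σ) K := C (coeff f d) * multiEsymmProd K (rowType f)
      have hle (g) (hg : g ∈ d.support) : rowCount g ≤ rowCount f := Nat.lt_succ_iff.1 (hr g hg)
      have hlead : lead ∈ multisymmetricSubalgebra ι σ K :=
        mul_mem (Subalgebra.algebraMap_mem _ _) (multiEsymmProd_mem_multisymmetricSubalgebra _)
      have hrest : d - lead ∈ A :=
        ihN _ (hN ▸ card_top_sub_leading_lt hd hfd) _ (sub_mem hd hlead)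
          (fun g hg => Nat.lt_succ_of_le (rowCount_le_of_mem_support_sub_leading hle rfl g hg)) rfl
      rw [← sub_add_cancel d lead]
      exact add_mem hrest (mul_mem (Subalgebra.algebraMap_mem _ _) (hprod _))

end Generation

end Multisymmetric

section OrderedProdPow

variable {M N : Type*} [Monoid M] [Monoid N] {m : ℕ}

def orderedProdPow (ξ : Fin m → M) (α : Fin m → ℕ) : M :=
  (List.ofFn fun k => ξ k ^ α k).prod

lemma map_orderedProdPow {F : Type*} [FunLike F M N] [MonoidHomClass F M N] (φ : F)
    (ξ : Fin m → M) (α : Fin m → ℕ) :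
    φ (orderedProdPow ξ α) = orderedProdPow (fun k => φ (ξ k)) α := by
  simp [orderedProdPow, map_list_prod, List.map_ofFn, Function.comp_def]

lemma orderedProdPow_eq_prod {P : Type*} [CommMonoid P] (ξ : Fin m → P) (α : Fin m → ℕ) :
    orderedProdPow ξ α = ∏ k, ξ k ^ α k :=
  List.prod_ofFn

lemma orderedProdPow_units_conj (u : Mˣ) (ξ : Fin m → M) (α : Fin m → ℕ) :
    orderedProdPow (fun k => ↑u⁻¹ * ξ k * ↑u) α = ↑u⁻¹ * orderedProdPow ξ α * ↑u := by
  have := map_orderedProdPow (MulDistribMulAction.toMonoidHom M (ConjAct.toConjAct u⁻¹)) ξ α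
  simpa [ConjAct.units_smul_def] using this.symm

end OrderedProdPow

namespace Matrix

variable {ι R : Type*} [Fintype ι] [DecidableEq ι] [CommRing R]

lemma charpoly_coeff_eq_of_map_eq_units_conj (φ : R →+* R) (u : (Matrix ι ι R)ˣ)
    {M : Matrix ι ι R} (h : M.map φ = (↑u⁻¹ : Matrix ι ι R) * M * (↑u : Matrix ι ι R)) (j : ℕ) :
    φ (M.charpoly.coeff j) = M.charpoly.coeff j := by
  rw [← Polynomial.coeff_map, ← charpoly_map, h, coe_units_inv, charpoly_units_conj']

lemma charpoly_diagonal_coeff_card_sub (v : ι → R) {a : ℕ} (ha : a ≤ Fintype.card ι) :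
    (diagonal v).charpoly.coeff (Fintype.card ι - a) = (-1) ^ a * (univ.val.map v).esymm a := by
  have hcard : Multiset.card (univ.val.map v) = Fintype.card ι := by simp
  rw [charpoly_diagonal, prod_eq_multiset_prod,
    show univ.val.map (fun i => Polynomial.X - Polynomial.C (v i)) =
      (univ.val.map v).map fun t => Polynomial.X - Polynomial.C t by rw [Multiset.map_map]; rfl,
    Multiset.prod_X_sub_C_coeff _ (hcard ▸ Nat.sub_le _ _), hcard, Nat.sub_sub_self ha]

end Matrix

namespace Multisymmetric

variable {ι K : Type*} [DecidableEq ι] [CommRing K] {m : ℕ}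

variable (ι K) in
noncomputable def genericMatrix (k : Fin m) : Matrix ι ι (MvPolynomial (Fin m × ι × ι) K) :=
  Matrix.of fun i j => X (k, i, j)

variable (ι K m) in
/-- The map `Δ`: restriction of polynomial functions to diagonal matrices. -/
noncomputable def restrictDiagonal :
    MvPolynomial (Fin m × ι × ι) K →ₐ[K] MvPolynomial (ι × Fin m) K :=
  aeval fun p => if p.2.1 = p.2.2 then X (p.2.1, p.1) else 0

lemma map_genericMatrix_restrictDiagonal (k : Fin m) :
    (genericMatrix ι K k).map (restrictDiagonal ι K m) = Matrix.diagonal fun i => X (i, k) := by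
  ext i j
  by_cases h : i = j
  · subst h; simp [genericMatrix, restrictDiagonal]
  · simp [genericMatrix, restrictDiagonal, h]

variable [Fintype ι]

variable (ι K) in
noncomputable def charpolyLift (a : ℕ) (α : Fin m → ℕ) : MvPolynomial (Fin m × ι × ι) K :=
  (-1) ^ a * (orderedProdPow (genericMatrix ι K) α).charpoly.coeff (Fintype.card ι - a)

lemma restrictDiagonal_charpolyLift {a : ℕ} (ha : a ≤ Fintype.card ι) (α : Fin m →₀ ℕ) :
    restrictDiagonal ι K m (charpolyLift ι K a α) = multiEsymm K a α := by
  have hdiag : (orderedProdPow (genericMatrix ι K) α).map (restrictDiagonal ι K m) =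
      Matrix.diagonal fun i => rowMonomial α i :=
    calc _ = orderedProdPow (fun k => Matrix.diagonal fun i => X (i, k)) α := by
          simpa only [RingHom.mapMatrix_apply, AlgHom.coe_toRingHom,
            map_genericMatrix_restrictDiagonal] using
            map_orderedProdPow (restrictDiagonal ι K m : _ →+* MvPolynomial (ι × Fin m) K).mapMatrix
              (genericMatrix ι K) α
      _ = Matrix.diagonal (orderedProdPow (fun k i => X (i, k)) α) :=
          (map_orderedProdPow (Matrix.diagonalRingHom ι _) _ α).symm
      _ = Matrix.diagonal fun i => rowMonomial α i := by
          refine congrArg Matrix.diagonal (funext fun i => ?_)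
          rw [rowMonomial_eq_prod, ← orderedProdPow_eq_prod]
          exact map_orderedProdPow (Pi.evalMonoidHom _ i) _ α
  rw [charpolyLift, map_mul, map_pow, map_neg, map_one, ← AlgHom.coe_toRingHom,
    ← Polynomial.coeff_map, ← Matrix.charpoly_map, AlgHom.coe_toRingHom, hdiag,
    Matrix.charpoly_diagonal_coeff_card_sub _ ha, ← mul_assoc, ← mul_pow, neg_one_mul, neg_neg,
    one_pow, one_mul, multiEsymm, aeval_esymm_eq_multiset_esymm]

lemma map_genericMatrix_eq_units_conj
    (φ : MvPolynomial (Fin m × ι × ι) K →ₐ[K] MvPolynomial (Fin m × ι × ι) K) (g : GL ι K)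
    (hφ : ∀ p : Fin m × ι × ι, φ (X p) =
      ((↑g⁻¹ : Matrix ι ι K).map (algebraMap K (MvPolynomial (Fin m × ι × ι) K)) *
        genericMatrix ι K p.1 *
        (↑g : Matrix ι ι K).map (algebraMap K (MvPolynomial (Fin m × ι × ι) K))) p.2.1 p.2.2)
    (k : Fin m) :
    (genericMatrix ι K k).map φ =
      (Matrix.GeneralLinearGroup.map (algebraMap K _) g)⁻¹.val * genericMatrix ι K k *
        (Matrix.GeneralLinearGroup.map (algebraMap K _) g).val := by
  refine Matrix.ext fun i j => ?_
  rw [← Matrix.GeneralLinearGroup.map_inv]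
  exact hφ (k, i, j)

lemma map_charpolyLift_eq_self
    (φ : MvPolynomial (Fin m × ι × ι) K →ₐ[K] MvPolynomial (Fin m × ι × ι) K)
    (u : (Matrix ι ι (MvPolynomial (Fin m × ι × ι) K))ˣ)
    (h : ∀ k, (genericMatrix ι K k).map φ = u⁻¹.val * genericMatrix ι K k * u.val)
    (a : ℕ) (α : Fin m → ℕ) :
    φ (charpolyLift ι K a α) = charpolyLift ι K a α := by
  rw [charpolyLift, map_mul, map_pow, map_neg, map_one, ← AlgHom.coe_toRingHom,
    Matrix.charpoly_coeff_eq_of_map_eq_units_conj _ u]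
  calc _ = orderedProdPow (fun k => (genericMatrix ι K k).map φ) α := by
        simpa only [RingHom.mapMatrix_apply, AlgHom.coe_toRingHom] using
          map_orderedProdPow
            (φ : MvPolynomial (Fin m × ι × ι) K →+* MvPolynomial (Fin m × ι × ι) K).mapMatrix _ α
    _ = _ := by simpa only [h] using orderedProdPow_units_conj u _ α

lemma multiEsymm_mem_map_restrictDiagonal {G : Type*}
    (c : G → (MvPolynomial (Fin m × ι × ι) K →ₐ[K] MvPolynomial (Fin m × ι × ι) K))
    (u : G → (Matrix ι ι (MvPolynomial (Fin m × ι × ι) K))ˣ)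
    (hc : ∀ g k, (genericMatrix ι K k).map (c g) = (u g)⁻¹.val * genericMatrix ι K k * (u g).val)
    (a : ℕ) (α : Fin m →₀ ℕ) :
    multiEsymm K a α ∈
      (⨅ g, AlgHom.equalizer (c g) (AlgHom.id K _)).map (restrictDiagonal ι K m) := by
  by_cases ha : a ≤ Fintype.card ι
  · refine ⟨charpolyLift ι K a α, Algebra.mem_iInf.2 fun g => ?_,
      restrictDiagonal_charpolyLift ha α⟩
    exact (AlgHom.mem_equalizer _ _ _).2 (map_charpolyLift_eq_self _ _ (hc g) a α)
  · rw [multiEsymm_eq_sum, powersetCard_eq_empty.2 (by rw [card_univ]; omega), sum_empty]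
    exact zero_mem _

end Multisymmetric

open Multisymmetric

theorem stmt9_general (K : Type*) [CommRing K] (n m : ℕ)
    (ξ : Fin m → Matrix (Fin n) (Fin n) (MvPolynomial (Fin m × Fin n × Fin n) K))
    (hξ : ξ = fun k => Matrix.of fun i j => MvPolynomial.X (k, i, j))
    (I : Ideal (MvPolynomial (Fin m × Fin n × Fin n) K))
    -- the simultaneous-conjugation action of `GL(n,K)` on `A` and the induced
    -- action on `A_P = A/I`
    (c : GL (Fin n) K →
      (MvPolynomial (Fin m × Fin n × Fin n) K →ₐ[K] MvPolynomial (Fin m × Fin n × Fin n) K))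
    (hc : ∀ (g : GL (Fin n) K) (p : Fin m × Fin n × Fin n),
      c g (MvPolynomial.X p) =
        ((((g⁻¹ : GL (Fin n) K) : Matrix (Fin n) (Fin n) K).map
            (algebraMap K (MvPolynomial (Fin m × Fin n × Fin n) K)) *
          ξ p.1 *
          ((g : Matrix (Fin n) (Fin n) K)).map
            (algebraMap K (MvPolynomial (Fin m × Fin n × Fin n) K)))
          p.2.1 p.2.2))
    (cP : GL (Fin n) K →
      ((MvPolynomial (Fin m × Fin n × Fin n) K ⧸ I) →ₐ[K]
        MvPolynomial (Fin m × Fin n × Fin n) K ⧸ I))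
    (hcP : ∀ g : GL (Fin n) K,
      (cP g).comp (Ideal.Quotient.mkₐ K I) = (Ideal.Quotient.mkₐ K I).comp (c g))
    (Δ : MvPolynomial (Fin m × Fin n × Fin n) K →ₐ[K] MvPolynomial (Fin n × Fin m) K)
    (hΔ : Δ = MvPolynomial.aeval fun p : Fin m × Fin n × Fin n =>
      if p.2.1 = p.2.2 then MvPolynomial.X (p.2.1, p.1) else 0)
    (Δ' : (MvPolynomial (Fin m × Fin n × Fin n) K ⧸ I) →ₐ[K]
      MvPolynomial (Fin n × Fin m) K)
    (hΔ' : Δ'.comp (Ideal.Quotient.mkₐ K I) = Δ) :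
    ∀ d : MvPolynomial (Fin n × Fin m) K,
      (∀ σ : Equiv.Perm (Fin n),
        MvPolynomial.rename (fun p : Fin n × Fin m => (σ p.1, p.2)) d = d) →
      (∃ a : MvPolynomial (Fin m × Fin n × Fin n) K,
        (∀ g : GL (Fin n) K, c g a = a) ∧ Δ a = d) ∧
      (∃ b : MvPolynomial (Fin m × Fin n × Fin n) K ⧸ I,
        (∀ g : GL (Fin n) K, cP g b = b) ∧ Δ' b = d) := by
  subst hξ hΔ
  intro d hd
  have hgen : Set.range (fun p : ℕ × (Fin m →₀ ℕ) => multiEsymm K p.1 p.2) ⊆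
      ((⨅ g, AlgHom.equalizer (c g) (AlgHom.id K _)).map (restrictDiagonal (Fin n) K m) :
        Set (MvPolynomial (Fin n × Fin m) K)) :=
    Set.range_subset_iff.2 fun p => multiEsymm_mem_map_restrictDiagonal c _
      (fun g => map_genericMatrix_eq_units_conj (c g) g (hc g)) p.1 p.2
  obtain ⟨a, ha, rfl⟩ :=
    Algebra.adjoin_le hgen (mem_adjoin_range_multiEsymm (mem_multisymmetricSubalgebra.2 hd))
  have hfix (g : GL (Fin n) K) : c g a = a :=
    (AlgHom.mem_equalizer _ _ _).1 (Algebra.mem_iInf.1 ha g)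
  refine ⟨⟨a, hfix, rfl⟩, Ideal.Quotient.mkₐ K I a, fun g => ?_, AlgHom.congr_fun hΔ' a⟩
  exact (AlgHom.congr_fun (hcP g) a).trans (congrArg _ (hfix g))

/-- the restrictions of `Δ : A → D` to `A^{GL(n,K)}` and of
`Δ' : A_P → D` to `A_P^{GL(n,K)}` both surject onto the ring of multisymmetric
functions `D^{Sₙ}` (over any commutative ring `K`). -/
theorem stmt9 (K : Type*) [CommRing K] (n m : ℕ)
    (ξ : Fin m → Matrix (Fin n) (Fin n) (MvPolynomial (Fin m × Fin n × Fin n) K))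
    (hξ : ξ = fun k => Matrix.of fun i j => MvPolynomial.X (k, i, j))
    (I : Ideal (MvPolynomial (Fin m × Fin n × Fin n) K))
    (hI : I = Ideal.span {a | ∃ k h i j, a = (ξ k * ξ h - ξ h * ξ k) i j})
    -- the simultaneous-conjugation action of `GL(n,K)` on `A` and the induced
    -- action on `A_P = A/I`
    (c : GL (Fin n) K →
      (MvPolynomial (Fin m × Fin n × Fin n) K →ₐ[K] MvPolynomial (Fin m × Fin n × Fin n) K))
    (hc : ∀ (g : GL (Fin n) K) (p : Fin m × Fin n × Fin n),
      c g (MvPolynomial.X p) =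
        ((((g⁻¹ : GL (Fin n) K) : Matrix (Fin n) (Fin n) K).map
            (algebraMap K (MvPolynomial (Fin m × Fin n × Fin n) K)) *
          ξ p.1 *
          ((g : Matrix (Fin n) (Fin n) K)).map
            (algebraMap K (MvPolynomial (Fin m × Fin n × Fin n) K)))
          p.2.1 p.2.2))
    (cP : GL (Fin n) K →
      ((MvPolynomial (Fin m × Fin n × Fin n) K ⧸ I) →ₐ[K]
        MvPolynomial (Fin m × Fin n × Fin n) K ⧸ I))
    (hcP : ∀ g : GL (Fin n) K,
      (cP g).comp (Ideal.Quotient.mkₐ K I) = (Ideal.Quotient.mkₐ K I).comp (c g))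
    (Δ : MvPolynomial (Fin m × Fin n × Fin n) K →ₐ[K] MvPolynomial (Fin n × Fin m) K)
    (hΔ : Δ = MvPolynomial.aeval fun p : Fin m × Fin n × Fin n =>
      if p.2.1 = p.2.2 then MvPolynomial.X (p.2.1, p.1) else 0)
    (Δ' : (MvPolynomial (Fin m × Fin n × Fin n) K ⧸ I) →ₐ[K]
      MvPolynomial (Fin n × Fin m) K)
    (hΔ' : Δ'.comp (Ideal.Quotient.mkₐ K I) = Δ) :
    ∀ d : MvPolynomial (Fin n × Fin m) K,
      (∀ σ : Equiv.Perm (Fin n),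
        MvPolynomial.rename (fun p : Fin n × Fin m => (σ p.1, p.2)) d = d) →
      (∃ a : MvPolynomial (Fin m × Fin n × Fin n) K,
        (∀ g : GL (Fin n) K, c g a = a) ∧ Δ a = d) ∧
      (∃ b : MvPolynomial (Fin m × Fin n × Fin n) K ⧸ I,
        (∀ g : GL (Fin n) K, cP g b = b) ∧ Δ' b = d) :=
  stmt9_general K n m ξ hξ I c hc cP hcP Δ hΔ Δ' hΔ'
end

section
/- Let K be an infinite field, let X ⊆ Mat(n, \bar{K})^m be the variety of m-tuples of pairwise commuting matrices, and let f be a GL(n)-invariant regular function on X that vanishes on all m-tuples of diagonal matrices. Then f vanishes identically on X. -/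
/-!
Commuting matrices over an algebraically closed field are simultaneously triangularizable, so by
invariance we may assume the tuple `T` is upper triangular. Conjugating by `diag(t⁻ⁱ)` multiplies
the `k`-th superdiagonal of each `T k` by `tᵏ`; hence `t ↦ f(T(t))` is a polynomial in `t` that is
constant, equal to `f(T)`, for `t ≠ 0`. An infinite field forces it to take the same value at
`t = 0`, where `T(0)` is the diagonal part of `T`, on which `f` vanishes.
-/

open Module Polynomial

theorem Commute.units_conj {M : Type*} [Monoid M] (u : Mˣ) {a b : M} (h : Commute a b) :
    Commute (u * a * ↑u⁻¹) (u * b * ↑u⁻¹) := by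
  simp only [commute_iff_eq, mul_assoc, Units.inv_mul_cancel_left, ← mul_assoc a, h.eq]

namespace Module.End

variable {K V ι : Type*} [Field K] [IsAlgClosed K] [AddCommGroup V] [Module K V]
  [FiniteDimensional K V]

theorem exists_common_eigenvector [Nontrivial V] (f : ι → End K V)
    (hf : ∀ i j, Commute (f i) (f j)) : ∃ v : V, v ≠ 0 ∧ ∀ i, ∃ μ : K, f i v = μ • v := by
  induction hn : finrank K V using Nat.strong_induction_on generalizing V with
  | _ n ih =>
  by_cases hscalar : ∀ i, ∃ μ : K, ∀ v, f i v = μ • v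
  · obtain ⟨v, hv⟩ := exists_ne (0 : V)
    exact ⟨v, hv, fun i => (hscalar i).imp fun μ h => h v⟩
  push Not at hscalar
  obtain ⟨i, hi⟩ := hscalar
  obtain ⟨μ, hμ⟩ := exists_eigenvalue (f i)
  set E := eigenspace (f i) μ
  have hE : ∀ j, Set.MapsTo (f j) E E := fun j => mapsTo_genEigenspace_of_comm (hf i j) μ 1
  have : Nontrivial E := Submodule.nontrivial_iff_ne_bot.mpr hμ
  have hlt : finrank K E < n := by
    refine hn ▸ Submodule.finrank_lt fun htop => ?_
    obtain ⟨v, hv⟩ := hi μ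
    exact hv (mem_eigenspace_iff.mp (Submodule.eq_top_iff'.mp htop v))
  obtain ⟨w, hw, hfw⟩ := ih _ hlt (fun j => (f j).restrict (hE j))
    (fun j k => LinearMap.restrict_commute (hf j k) _ _) rfl
  exact ⟨w, by simpa using hw, fun j => (hfw j).imp fun _ h => congrArg Subtype.val h⟩

theorem exists_basis_apply_mem_span_Iic (f : ι → End K V) (hf : ∀ i j, Commute (f i) (f j))
    {n : ℕ} (hn : finrank K V = n) :
    ∃ b : Basis (Fin n) K V, ∀ i j, f i (b j) ∈ Submodule.span K (b '' Set.Iic j) := by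
  induction n generalizing V with
  | zero =>
    have : Subsingleton V := finrank_zero_iff.mp hn
    exact ⟨Basis.empty V, fun _ j => j.elim0⟩
  | succ n ih =>
    have : Nontrivial V := nontrivial_of_finrank_eq_succ hn
    -- an invariant hyperplane: the kernel of a common eigenvector of the transposes
    obtain ⟨φ, hφ, hφf⟩ := exists_common_eigenvector (fun i => (f i).dualMap)
      fun i j => by
        rw [commute_iff_eq, mul_eq_comp, mul_eq_comp, LinearMap.dualMap_comp_dualMap,
          LinearMap.dualMap_comp_dualMap, ← mul_eq_comp, ← mul_eq_comp, (hf j i).eq]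
    have hN : ∀ i, Set.MapsTo (f i) (LinearMap.ker φ) (LinearMap.ker φ) := by
      intro i x hx
      obtain ⟨μ, hμ⟩ := hφf i
      simpa [LinearMap.mem_ker.mp hx] using congrArg (· x) hμ
    obtain ⟨y, hy⟩ : ∃ y, φ y ≠ 0 := by
      by_contra! h
      exact hφ (LinearMap.ext h)
    have hrank : finrank K (LinearMap.ker φ) = n := by
      have := Module.Dual.finrank_ker_add_one_of_ne_zero hφ
      omega
    obtain ⟨b, hb⟩ := ih (fun i => (f i).restrict (hN i))
      (fun i j => LinearMap.restrict_commute (hf i j) _ _) hrank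
    have hli : ∀ (c : K), ∀ x ∈ LinearMap.ker φ, c • y + x = 0 → c = 0 := by
      intro c x hx h
      simpa [hy, LinearMap.mem_ker.mp hx] using congrArg φ h
    have hsp : ∀ z, ∃ c : K, z + c • y ∈ LinearMap.ker φ :=
      fun z => ⟨-(φ z / φ y), by simp [div_mul_cancel₀ _ hy]⟩
    refine ⟨Basis.mkFinSnoc b y hli hsp, fun i j => ?_⟩
    induction j using Fin.lastCases with
    | last =>
      rw [← Fin.top_eq_last, Set.Iic_top, Set.image_univ, Basis.span_eq]
      exact Submodule.mem_top
    | cast j =>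
      have hmem := Submodule.mem_map_of_mem (f := (LinearMap.ker φ).subtype) (hb i j)
      rw [Submodule.map_span, Set.image_image] at hmem
      rw [Basis.coe_mkFinSnoc, Fin.snoc_castSucc]
      refine Submodule.span_mono ?_ hmem
      rintro _ ⟨a, ha, rfl⟩
      exact ⟨a.castSucc, Fin.castSucc_le_castSucc_iff.mpr ha, by simp⟩

end Module.End

theorem Polynomial.eval_eq_of_forall_ne {R : Type*} [CommRing R] [IsDomain R] [Infinite R]
    {p : R[X]} {a c : R} (h : ∀ t ≠ a, p.eval t = c) : p.eval a = c := by
  have hp : p = C c := eq_of_infinite_eval_eq p (C c)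
    ((Set.finite_singleton a).infinite_compl.mono fun t ht => by simpa using h t ht)
  rw [hp, eval_C]

namespace Matrix

variable {ι m R K : Type*} [CommRing R] [Field K] {n : ℕ}

abbrev evalEntries (M : ι → Matrix m m R) : MvPolynomial (ι × m × m) R →+* R :=
  MvPolynomial.eval fun p => M p.1 p.2.1 p.2.2

def IsConjInvariantOnCommuting [Fintype m] [DecidableEq m] (f : MvPolynomial (ι × m × m) R) :
    Prop :=
  ∀ (g : GL m R) (M : ι → Matrix m m R), (∀ k l, Commute (M k) (M l)) →
    evalEntries (fun k => (g : Matrix m m R) * M k * ((g⁻¹ : GL m R) : Matrix m m R)) f =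
      evalEntries M f

-- Truncated subtraction leaves the entries below the diagonal unscaled; only upper triangular
-- matrices are ever scaled.
def scaleSuperdiagonals (A : Matrix (Fin n) (Fin n) R) (t : R) : Matrix (Fin n) (Fin n) R :=
  of fun i j => A i j * t ^ ((j : ℕ) - i)

theorem scaleSuperdiagonals_zero {A : Matrix (Fin n) (Fin n) R} (hA : A.IsUpperTriangular) :
    A.scaleSuperdiagonals 0 = diagonal A.diag := by
  ext i j
  rcases lt_trichotomy i j with hij | rfl | hji
  · simp [scaleSuperdiagonals, hij.ne, Nat.sub_ne_zero_of_lt (Fin.lt_def.mp hij)]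
  · simp [scaleSuperdiagonals]
  · simp [scaleSuperdiagonals, hji.ne', hA hji]

theorem exists_conj_eq_scaleSuperdiagonals {t : K} (ht : t ≠ 0) :
    ∃ g : GL (Fin n) K, ∀ A : Matrix (Fin n) (Fin n) K, A.IsUpperTriangular →
      (g : Matrix (Fin n) (Fin n) K) * A * ((g⁻¹ : GL (Fin n) K) : Matrix (Fin n) (Fin n) K) =
        A.scaleSuperdiagonals t := by
  refine ⟨⟨diagonal fun i => (t ^ (i : ℕ))⁻¹, diagonal fun i => t ^ (i : ℕ), ?_, ?_⟩,
    fun A hA => ?_⟩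
  · simp [diagonal_mul_diagonal, ht]
  · simp [diagonal_mul_diagonal, ht]
  ext i j
  simp only [Units.inv_mk, diagonal_mul, mul_diagonal, scaleSuperdiagonals, of_apply]
  rcases lt_or_ge j i with hji | hij
  · simp [hA hji]
  · rw [← pow_mul_pow_sub t (Fin.le_def.mp hij)]
    field_simp

theorem exists_polynomial_eval_scaleSuperdiagonals (f : MvPolynomial (ι × Fin n × Fin n) R)
    (M : ι → Matrix (Fin n) (Fin n) R) :
    ∃ P : R[X], ∀ t, P.eval t = evalEntries (fun k => (M k).scaleSuperdiagonals t) f := by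
  refine ⟨MvPolynomial.eval₂ C (fun p => C (M p.1 p.2.1 p.2.2) * X ^ ((p.2.2 : ℕ) - p.2.1)) f,
    fun t => ?_⟩
  rw [MvPolynomial.polynomial_eval_eval₂,
    show (evalRingHom t).comp C = RingHom.id R from RingHom.ext fun _ => eval_C]
  simp [scaleSuperdiagonals, evalEntries]

theorem evalEntries_diagonal_diag_eq_of_isUpperTriangular [Infinite K]
    {f : MvPolynomial (ι × Fin n × Fin n) K} (hf : IsConjInvariantOnCommuting f)
    {T : ι → Matrix (Fin n) (Fin n) K} (hT : ∀ k, (T k).IsUpperTriangular)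
    (hTT : ∀ k l, Commute (T k) (T l)) :
    evalEntries (fun k => diagonal (T k).diag) f = evalEntries T f := by
  obtain ⟨P, hP⟩ := exists_polynomial_eval_scaleSuperdiagonals f T
  have hP0 : P.eval 0 = evalEntries (fun k => diagonal (T k).diag) f := by
    simp only [hP, scaleSuperdiagonals_zero (hT _)]
  rw [← hP0]
  refine eval_eq_of_forall_ne fun t ht => ?_
  obtain ⟨g, hg⟩ := exists_conj_eq_scaleSuperdiagonals ht
  rw [hP, ← hf g T hTT]
  simp only [hg _ (hT _)]

theorem exists_conj_isUpperTriangular_of_commute [IsAlgClosed K]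
    (M : ι → Matrix (Fin n) (Fin n) K) (hM : ∀ i j, Commute (M i) (M j)) :
    ∃ g : GL (Fin n) K, ∀ i, ((g : Matrix (Fin n) (Fin n) K) * M i *
      ((g⁻¹ : GL (Fin n) K) : Matrix (Fin n) (Fin n) K)).IsUpperTriangular := by
  obtain ⟨b, hb⟩ := Module.End.exists_basis_apply_mem_span_Iic (fun i => toLin' (M i))
    (fun i j => by rw [commute_iff_eq, Module.End.mul_eq_comp, Module.End.mul_eq_comp,
      ← toLin'_mul, ← toLin'_mul, (hM i j).eq]) (finrank_fin_fun K)
  let e := Pi.basisFun K (Fin n)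
  refine ⟨⟨b.toMatrix e, e.toMatrix b, b.toMatrix_mul_toMatrix_flip e,
    e.toMatrix_mul_toMatrix_flip b⟩, fun i r c hcr => ?_⟩
  have hconj : b.toMatrix e * M i * e.toMatrix b = LinearMap.toMatrix b b (toLin' (M i)) := by
    rw [← basis_toMatrix_mul_linearMap_toMatrix_mul_basis_toMatrix b e b e,
      LinearMap.toMatrix_eq_toMatrix', LinearMap.toMatrix'_toLin']
  change (b.toMatrix e * M i * e.toMatrix b) r c = 0
  rw [hconj, LinearMap.toMatrix_apply, ← Finsupp.notMem_support_iff]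
  exact fun hmem => (not_le.mpr hcr) (b.mem_span_image.mp (hb i c) hmem)

theorem evalEntries_eq_zero_of_commute [IsAlgClosed K] {f : MvPolynomial (ι × Fin n × Fin n) K}
    (hf : IsConjInvariantOnCommuting f)
    (hdiag : ∀ d : ι → Fin n → K, evalEntries (fun k => diagonal (d k)) f = 0)
    {M : ι → Matrix (Fin n) (Fin n) K} (hM : ∀ k l, Commute (M k) (M l)) :
    evalEntries M f = 0 := by
  obtain ⟨g, hg⟩ := exists_conj_isUpperTriangular_of_commute M hM
  rw [← hf g M hM, ← evalEntries_diagonal_diag_eq_of_isUpperTriangular hf hg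
    fun k l => (hM k l).units_conj g]
  exact hdiag _

end Matrix

theorem stmt14_general (K : Type*) [Field K] (n m : ℕ)
    (f : MvPolynomial (Fin m × Fin n × Fin n) (AlgebraicClosure K))
    (hinv : ∀ (g : GL (Fin n) (AlgebraicClosure K))
        (M : Fin m → Matrix (Fin n) (Fin n) (AlgebraicClosure K)),
      (∀ k l, Commute (M k) (M l)) →
      MvPolynomial.eval
        (fun p : Fin m × Fin n × Fin n =>
          ((g : Matrix (Fin n) (Fin n) (AlgebraicClosure K)) * M p.1 *
            ((g⁻¹ : GL (Fin n) (AlgebraicClosure K)) :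
              Matrix (Fin n) (Fin n) (AlgebraicClosure K))) p.2.1 p.2.2) f =
      MvPolynomial.eval (fun p : Fin m × Fin n × Fin n => M p.1 p.2.1 p.2.2) f)
    (hdiag : ∀ d : Fin m → (Fin n → AlgebraicClosure K),
      MvPolynomial.eval
        (fun p : Fin m × Fin n × Fin n =>
          Matrix.diagonal (d p.1) p.2.1 p.2.2) f = 0) :
    ∀ M : Fin m → Matrix (Fin n) (Fin n) (AlgebraicClosure K),
      (∀ k l, Commute (M k) (M l)) →
      MvPolynomial.eval (fun p : Fin m × Fin n × Fin n => M p.1 p.2.1 p.2.2) f = 0 :=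
  fun _ hM => Matrix.evalEntries_eq_zero_of_commute hinv hdiag hM

/-- let `K` be an infinite field, `K̄` its algebraic closure, and let
`X ⊆ Mat(n,K̄)^m` be the variety of `m`-tuples of pairwise commuting matrices. If a
`GL(n)`-invariant regular (polynomial) function `f` on `X` vanishes on all `m`-tuples
of diagonal matrices, then `f` vanishes identically on `X`. -/
theorem stmt14 (K : Type*) [Field K] [Infinite K] (n m : ℕ)
    (f : MvPolynomial (Fin m × Fin n × Fin n) (AlgebraicClosure K))
    (hinv : ∀ (g : GL (Fin n) (AlgebraicClosure K))
        (M : Fin m → Matrix (Fin n) (Fin n) (AlgebraicClosure K)),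
      (∀ k l, Commute (M k) (M l)) →
      MvPolynomial.eval
        (fun p : Fin m × Fin n × Fin n =>
          ((g : Matrix (Fin n) (Fin n) (AlgebraicClosure K)) * M p.1 *
            ((g⁻¹ : GL (Fin n) (AlgebraicClosure K)) :
              Matrix (Fin n) (Fin n) (AlgebraicClosure K))) p.2.1 p.2.2) f =
      MvPolynomial.eval (fun p : Fin m × Fin n × Fin n => M p.1 p.2.1 p.2.2) f)
    (hdiag : ∀ d : Fin m → (Fin n → AlgebraicClosure K),
      MvPolynomial.eval
        (fun p : Fin m × Fin n × Fin n =>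
          Matrix.diagonal (d p.1) p.2.1 p.2.2) f = 0) :
    ∀ M : Fin m → Matrix (Fin n) (Fin n) (AlgebraicClosure K),
      (∀ k l, Commute (M k) (M l)) →
      MvPolynomial.eval (fun p : Fin m × Fin n × Fin n => M p.1 p.2.1 p.2.2) f = 0 :=
  stmt14_general K n m f hinv hdiag
end
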